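/- For every connected simple graph G of diameter d ≥ 4 with minimum degree at least two, th_-(G) ≥ √d − 1/4. -/

import Mathlib

open SimpleGraph

/-- One round of skew zero forcing: every vertex (blue or white) with exactly one
white neighbor colors that neighbor blue. -/
def skewStep {V : Type*} (G : SimpleGraph V) (B : Set V) : Set V :=
  B ∪ {w | ∃ v, G.Adj v w ∧ ∀ u, G.Adj v u → u ∉ B → u = w}

/-- The set of blue vertices after `n` rounds of skew zero forcing starting from `S`. -/
def skewIter {V : Type*} (G : SimpleGraph V) (S : Set V) : ℕ → Set V
  | 0 => S
  | n + 1 => skewStep G (skewIter G S n)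

/-- `S` is a skew zero forcing set of `G`. -/
def IsSkewZFS {V : Type*} (G : SimpleGraph V) (S : Set V) : Prop :=
  ∃ n, skewIter G S n = Set.univ

/-- The skew propagation time `pt₋(G;S)`: the number of rounds needed for all
vertices to become blue. -/
noncomputable def skewPt {V : Type*} (G : SimpleGraph V) (S : Set V) : ℕ :=
  sInf {n | skewIter G S n = Set.univ}

/-- The skew throttling number `th₋(G)`. -/
noncomputable def skewTh {V : Type*} (G : SimpleGraph V) : ℕ :=
  sInf {m | ∃ S : Set V, IsSkewZFS G S ∧ m = S.ncard + skewPt G S}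

/-- The skew throttling number over sets of size `k`, `th₋(G,k)`. -/
noncomputable def skewThK {V : Type*} (G : SimpleGraph V) (k : ℕ) : ℕ :=
  sInf {m | ∃ S : Set V, IsSkewZFS G S ∧ S.ncard = k ∧ m = S.ncard + skewPt G S}

/-- The skew zero forcing number `Z₋(G)`. -/
noncomputable def skewZ {V : Type*} (G : SimpleGraph V) : ℕ :=
  sInf {m | ∃ S : Set V, IsSkewZFS G S ∧ m = S.ncard}

/-- The skew propagation time `pt₋(G)`: minimum propagation time over minimum
skew zero forcing sets. -/
noncomputable def skewPtMin {V : Type*} (G : SimpleGraph V) : ℕ :=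
  sInf {m | ∃ S : Set V, IsSkewZFS G S ∧ S.ncard = skewZ G ∧ m = skewPt G S}

/-- `rK₂`: the disjoint union of `r` copies of `K₂`. -/
def rK2 (r : ℕ) : SimpleGraph (Fin r × Fin 2) :=
  SimpleGraph.fromRel (fun a b => a.1 = b.1)

/-- Disjoint union of two simple graphs. -/
def disjUnion {α β : Type*} (G : SimpleGraph α) (H : SimpleGraph β) :
    SimpleGraph (α ⊕ β) :=
  SimpleGraph.fromRel (fun x y =>
    match x, y with
    | Sum.inl a, Sum.inl b => G.Adj a b
    | Sum.inr a, Sum.inr b => H.Adj a b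
    | _, _ => False)

/-- The corona `G ∘ K₁`: attach a pendant leaf to every vertex of `G`. -/
def coronaK1 {α : Type*} (G : SimpleGraph α) : SimpleGraph (α ⊕ α) :=
  SimpleGraph.fromRel (fun x y =>
    match x, y with
    | Sum.inl a, Sum.inl b => G.Adj a b
    | Sum.inl a, Sum.inr b => a = b
    | _, _ => False)

/-- The corona `G ∘ K₂`: attach a private copy of `K₂` (a triangle) to every
vertex of `G`. -/
def coronaK2 {α : Type*} (G : SimpleGraph α) : SimpleGraph (α ⊕ α × Fin 2) :=
  SimpleGraph.fromRel (fun x y =>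
    match x, y with
    | Sum.inl a, Sum.inl b => G.Adj a b
    | Sum.inl a, Sum.inr b => a = b.1
    | Sum.inr a, Sum.inr b => a.1 = b.1
    | _, _ => False)

/-- The graph `H(s,t)` with hub `b`, pendant paths `b xᵢ yᵢ` and triangles `b zᵢ wᵢ`. -/
def Hgraph (s t : ℕ) : SimpleGraph (Unit ⊕ ((Fin s × Fin 2) ⊕ (Fin t × Fin 2))) :=
  SimpleGraph.fromRel (fun x y =>
    match x, y with
    | Sum.inl _, Sum.inr (Sum.inl p) => p.2 = 0
    | Sum.inl _, Sum.inr (Sum.inr _) => True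
    | Sum.inr (Sum.inl p), Sum.inr (Sum.inl q) => p.1 = q.1
    | Sum.inr (Sum.inr p), Sum.inr (Sum.inr q) => p.1 = q.1
    | _, _ => False)

/-- The friendship graph `Fₙ`: a universal vertex joined to `n` disjoint copies of `K₂`. -/
def friendshipGraph (n : ℕ) : SimpleGraph (Unit ⊕ (Fin n × Fin 2)) :=
  SimpleGraph.fromRel (fun x y =>
    match x, y with
    | Sum.inl _, Sum.inr _ => True
    | Sum.inr p, Sum.inr q => p.1 = q.1
    | _, _ => False)

/-- The balanced spider `T_{p,ℓ}`: a center with `p` legs of `ℓ` vertices each. -/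
def spider (p ℓ : ℕ) : SimpleGraph (Unit ⊕ (Fin p × Fin ℓ)) :=
  SimpleGraph.fromRel (fun x y =>
    match x, y with
    | Sum.inl _, Sum.inr q => q.2.val = 0
    | Sum.inr q, Sum.inr q' => q.1 = q'.1 ∧ q'.2.val = q.2.val + 1
    | _, _ => False)

/-- The hypercube graph `Qₙ`: binary strings of length `n`, adjacent iff they
differ in exactly one coordinate. -/
def hypercube (n : ℕ) : SimpleGraph (Fin n → Bool) :=
  SimpleGraph.fromRel (fun x y => ∃! i, x i ≠ y i)

/-!
With minimum degree at least two, a vertex can force only once one of its other neighbours is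
blue, so each round colours only vertices within distance two of the current blue set; after
`pt₋(G;S)` rounds every vertex is within distance `2 pt₋(G;S)` of `S`. The vertices of a
diametral geodesic `x = p₀, …, p_d = y` that are close to a fixed `s ∈ S` therefore occupy a
window of at most `4 pt₋(G;S) + 1` consecutive positions, whence
`d + 1 ≤ |S| (4 pt₋(G;S) + 1) ≤ (|S| + pt₋(G;S) + 1/4)²` by AM-GM.
-/

namespace SimpleGraph

variable {V : Type*} {G : SimpleGraph V}

namespace Walk

variable {u v : V} {p : G.Walk u v}

lemma edist_getVert_getVert_of_length_eq_dist (hp : p.length = G.dist u v) {i j : ℕ}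
    (hij : i ≤ j) (hj : j ≤ p.length) :
    G.edist (p.getVert i) (p.getVert j) = (j - i : ℕ) := by
  have hlen := length_eq_dist_of_subwalk hp (((p.take j).isSubwalk_drop i).trans
    (p.isSubwalk_take j))
  have hreach := ((p.take j).drop i).reachable
  rw [drop_length, take_length, take_getVert, min_eq_left hj, min_eq_right hij] at hlen
  rw [take_getVert, min_eq_right hij] at hreach
  rw [← hreach.coe_dist_eq_edist, ← hlen]

lemma sub_le_of_edist_getVert_le (hp : p.length = G.dist u v) {i j : ℕ} (hij : i ≤ j)
    (hj : j ≤ p.length) {s : V} {r : ℕ} (hsi : G.edist s (p.getVert i) ≤ r)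
    (hsj : G.edist s (p.getVert j) ≤ r) : j - i ≤ 2 * r := by
  have : ((j - i : ℕ) : ℕ∞) ≤ 2 * r :=
    calc ((j - i : ℕ) : ℕ∞) = G.edist (p.getVert i) (p.getVert j) :=
          (edist_getVert_getVert_of_length_eq_dist hp hij hj).symm
      _ ≤ G.edist (p.getVert i) s + G.edist s (p.getVert j) := G.edist_triangle
      _ ≤ r + r := add_le_add (G.edist_comm ▸ hsi) hsj
      _ = 2 * r := (two_mul _).symm
  exact_mod_cast this

end Walk

lemma exists_mem_edist_le_two_of_mem_skewStep (hδ : ∀ v : V, 2 ≤ (G.neighborSet v).ncard)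
    {B : Set V} {w : V} (hw : w ∈ skewStep G B) : ∃ u ∈ B, G.edist u w ≤ 2 := by
  rcases hw with hw | ⟨v, hvw, hforce⟩
  · exact ⟨w, hw, by simp⟩
  obtain ⟨u, hu, huw⟩ := Set.exists_ne_of_one_lt_ncard (hδ v) w
  have huB : u ∈ B := by
    by_contra huB
    exact huw (hforce u hu huB)
  exact ⟨u, huB, edist_le (.cons hu.symm (.cons hvw .nil))⟩

lemma exists_mem_edist_le_of_mem_skewIter (hδ : ∀ v : V, 2 ≤ (G.neighborSet v).ncard)
    (S : Set V) {t : ℕ} {w : V} (hw : w ∈ skewIter G S t) :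
    ∃ s ∈ S, G.edist s w ≤ 2 * t := by
  induction t generalizing w with
  | zero => exact ⟨w, hw, by simp⟩
  | succ t ih =>
    obtain ⟨u, hu, huw⟩ := exists_mem_edist_le_two_of_mem_skewStep hδ hw
    obtain ⟨s, hs, hsu⟩ := ih hu
    refine ⟨s, hs, ?_⟩
    calc G.edist s w ≤ G.edist s u + G.edist u w := G.edist_triangle
      _ ≤ 2 * t + 2 := add_le_add hsu huw
      _ = 2 * ↑(t + 1) := by push_cast; ring

end SimpleGraph

lemma IsSkewZFS.skewIter_skewPt {V : Type*} {G : SimpleGraph V} {S : Set V}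
    (hS : IsSkewZFS G S) : skewIter G S (skewPt G S) = Set.univ :=
  Nat.sInf_mem hS

lemma exists_isSkewZFS_skewTh_eq {V : Type*} (G : SimpleGraph V) :
    ∃ S, IsSkewZFS G S ∧ skewTh G = S.ncard + skewPt G S :=
  Nat.sInf_mem (s := {m | ∃ S : Set V, IsSkewZFS G S ∧ m = S.ncard + skewPt G S})
    ⟨_, Set.univ, ⟨0, rfl⟩, rfl⟩

lemma le_ncard_mul_of_eq_imp_sub_lt {α : Type*} {S : Set α} (hS : S.Finite) (f : ℕ → α)
    {n M : ℕ} (hf : ∀ i < n, f i ∈ S)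
    (hclose : ∀ i j, i ≤ j → j < n → f i = f j → j - i < M) :
    n ≤ S.ncard * M := by
  rcases Nat.eq_zero_or_pos n with rfl | hn
  · exact Nat.zero_le _
  have hM : 0 < M := by simpa using hclose 0 0 le_rfl hn rfl
  have hmaps (i : ℕ) (hi : i ∈ (Finset.range n : Set ℕ)) :
      (f i, i % M) ∈ S ×ˢ (Finset.range M : Set ℕ) :=
    ⟨hf i (Finset.mem_range.1 hi), Finset.mem_range.2 (Nat.mod_lt i hM)⟩
  -- an index is determined by its label and its residue mod `M`
  have hinj : Set.InjOn (fun i => (f i, i % M)) (Finset.range n : Set ℕ) := by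
    intro i hi j hj hij
    obtain ⟨hfij, hmod⟩ := Prod.mk.inj hij
    have hi := Finset.mem_range.1 hi
    have hj := Finset.mem_range.1 hj
    refine Nat.ModEq.eq_of_abs_lt hmod (abs_lt.2 ?_)
    rcases le_total i j with hle | hle
    · have := hclose i j hle hj hfij
      omega
    · have := hclose j i hle hi hfij.symm
      omega
  have := Set.ncard_le_ncard_of_injOn _ hmaps hinj (hS.prod (Finset.range M).finite_toSet)
  rwa [Set.ncard_prod, Set.ncard_coe_finset, Set.ncard_coe_finset, Finset.card_range,
    Finset.card_range] at this

lemma sqrt_sub_quarter_le_add_of_succ_le_mul {d k t : ℕ} (h : d + 1 ≤ k * (4 * t + 1)) :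
    √(d : ℝ) - 1 / 4 ≤ k + t := by
  have h' : (d : ℝ) + 1 ≤ k * (4 * t + 1) := by exact_mod_cast h
  have hsq : (d : ℝ) ≤ (k + t + 1 / 4) ^ 2 := by
    nlinarith [sq_nonneg ((k : ℝ) - t - 1 / 4)]
  have := Real.sqrt_le_sqrt hsq
  rw [Real.sqrt_sq (by positivity)] at this
  linarith

theorem skewTh_ge_sqrt_diam_general {V : Type*} [Fintype V] (G : SimpleGraph V)
    (hc : G.Connected) (d : ℕ) (hd : G.diam = d)
    (hδ : ∀ v : V, 2 ≤ (G.neighborSet v).ncard) :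
    Real.sqrt d - 1 / 4 ≤ (skewTh G : ℝ) := by
  obtain ⟨S, hS, hth⟩ := exists_isSkewZFS_skewTh_eq G
  set t := skewPt G S
  have : Nonempty V := hc.nonempty
  obtain ⟨x, y, hxy⟩ := G.exists_dist_eq_diam
  obtain ⟨p, hp⟩ := hc.exists_walk_length_eq_dist x y
  have hlen : p.length = d := by rw [hp, hxy, hd]
  have hnear (i : ℕ) : ∃ s ∈ S, G.edist s (p.getVert i) ≤ 2 * t :=
    exists_mem_edist_le_of_mem_skewIter hδ S (hS.skewIter_skewPt ▸ Set.mem_univ _)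
  choose s hsS hsd using hnear
  have hcount : d + 1 ≤ S.ncard * (4 * t + 1) :=
    le_ncard_mul_of_eq_imp_sub_lt S.toFinite s (fun i _ => hsS i) fun i j hij hj hs => by
      have := p.sub_le_of_edist_getVert_le (r := 2 * t) hp hij (by omega)
        (by exact_mod_cast hsd i) (by exact_mod_cast hs ▸ hsd j)
      omega
  rw [hth]
  push_cast
  exact sqrt_sub_quarter_le_add_of_succ_le_mul hcount

/-- for connected graphs of diameter `d ≥ 4` and minimum degree at
least two, `th₋(G) ≥ √d - 1/4`. -/
theorem skewTh_ge_sqrt_diam {V : Type*} [Fintype V] (G : SimpleGraph V)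
    (hc : G.Connected) (d : ℕ) (hd : G.diam = d) (hd4 : 4 ≤ d)
    (hδ : ∀ v : V, 2 ≤ (G.neighborSet v).ncard) :
    Real.sqrt d - 1 / 4 ≤ (skewTh G : ℝ) :=
  skewTh_ge_sqrt_diam_general G hc d hd hδ
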